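/- For a semi-external 𝕀' and any I' ∈ 𝕀' with Y ⊂ X\I', the polynomial p_Y lies in span{Q_I : I ∈ 𝕀'}; consequently P_+(X,𝕀') ⊂ span{Q_I : I ∈ 𝕀'}. -/

import Mathlib

open MvPolynomial

attribute [local instance] Classical.propDecidable

noncomputable section

/-- The linear polynomial `t ↦ v ⬝ t` attached to a vector `v ∈ ℝⁿ`. -/
def lin (n : ℕ) (v : Fin n → ℝ) : MvPolynomial (Fin n) ℂ :=
  ∑ i, MvPolynomial.C (v i : ℂ) * MvPolynomial.X i

/-- `p_Y`, the product of the linear polynomials over an index set `Y`. -/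
def pProd {n : ℕ} {ι : Type*} (x : ι → Fin n → ℝ) (Y : Finset ι) : MvPolynomial (Fin n) ℂ :=
  ∏ i ∈ Y, lin n (x i)

/-- The differential operator `p(D)` (substitute `∂/∂tᵢ` for `tᵢ` in `p`). -/
def pDop {n : ℕ} (p : MvPolynomial (Fin n) ℂ) : Module.End ℂ (MvPolynomial (Fin n) ℂ) :=
  (AddMonoidAlgebra.coeff p).sum fun m c =>
    c • (((List.finRange n).map fun i =>
      ((MvPolynomial.pderiv i).toLinearMap : Module.End ℂ (MvPolynomial (Fin n) ℂ)) ^ m i).prod)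

/-- The kernel of a polynomial ideal: all `q` with `p(D)q = 0` for every `p ∈ I`. -/
def dKer {n : ℕ} (I : Ideal (MvPolynomial (Fin n) ℂ)) : Submodule ℂ (MvPolynomial (Fin n) ℂ) :=
  ⨅ p ∈ I, LinearMap.ker (pDop p)

/-- Standard inner product on `ℝⁿ`. -/
def dotp {n : ℕ} (u v : Fin n → ℝ) : ℝ := ∑ i, u i * v i

/-- `B` is a basis drawn from the multiset `x`. -/
def IsBasisSet {n : ℕ} {ι : Type*} (x : ι → Fin n → ℝ) (B : Finset ι) : Prop :=
  LinearIndependent ℝ (fun b : {i // i ∈ B} => x b.1) ∧ Submodule.span ℝ (x '' ↑B) = ⊤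

/-- `I` is an independent subset of the multiset `x`. -/
def IsIndepSet {n : ℕ} {ι : Type*} (x : ι → Fin n → ℝ) (I : Finset ι) : Prop :=
  LinearIndependent ℝ (fun b : {i // i ∈ I} => x b.1)

/-- `F` is a facet hyperplane of `X`. -/
def IsFacet {n : ℕ} {ι : Type*} (x : ι → Fin n → ℝ) (F : Submodule ℝ (Fin n → ℝ)) : Prop :=
  Module.finrank ℝ F = n - 1 ∧ ∃ Y : Finset ι, Submodule.span ℝ (x '' ↑Y) = F

/-- `η` is a (nonzero) normal to the subspace `F`. -/
def IsNormal {n : ℕ} (η : Fin n → ℝ) (F : Submodule ℝ (Fin n → ℝ)) : Prop :=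
  η ≠ 0 ∧ ∀ v ∈ F, dotp η v = 0

/-- `m(F)`: number of elements of `X` outside a subspace `F`. -/
def mult {n : ℕ} {ι : Type*} [Fintype ι] (x : ι → Fin n → ℝ) (F : Submodule ℝ (Fin n → ℝ)) : ℕ :=
  (Finset.univ.filter fun i => x i ∉ F).card

/-- The central ideal `I(X)`. -/
def centralIdeal {n : ℕ} {ι : Type*} [Fintype ι] (x : ι → Fin n → ℝ) :
    Ideal (MvPolynomial (Fin n) ℂ) :=
  Ideal.span {p | ∃ F η, IsFacet x F ∧ IsNormal η F ∧ p = lin n η ^ mult x F}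

/-- The central `P`-space of the sub-multiset indexed by `A`. -/
def centralPOn {n : ℕ} {ι : Type*} [Fintype ι] [DecidableEq ι] (x : ι → Fin n → ℝ)
    (A : Finset ι) : Submodule ℂ (MvPolynomial (Fin n) ℂ) :=
  Submodule.span ℂ
    {p | ∃ Y : Finset ι, Y ⊆ A ∧
      Module.finrank ℝ (Submodule.span ℝ (x '' ↑(A \ Y))) = n ∧ p = pProd x Y}

/-- `X(Y)` with respect to the order on indices. -/
def XofY {n N : ℕ} (x : Fin N → Fin n → ℝ) (Y : Finset (Fin N)) : Finset (Fin N) :=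
  Finset.univ.filter fun i => i ∉ Y ∧ x i ∉ Submodule.span ℝ (x '' {j | j ∈ Y ∧ j < i})

/-- the valuation `val(Y) = #X(Y)`. -/
def valu {n N : ℕ} (x : Fin N → Fin n → ℝ) (Y : Finset (Fin N)) : ℕ := (XofY x Y).card

/-- `Q_Y := p_{X(Y)}`. -/
def QB {n N : ℕ} (x : Fin N → Fin n → ℝ) (Y : Finset (Fin N)) : MvPolynomial (Fin n) ℂ :=
  pProd x (XofY x Y)

/-- A semi-external collection of independent sets. -/
def SemiExternal {n N : ℕ} (x : Fin N → Fin n → ℝ) (I' : Set (Finset (Fin N))) : Prop :=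
  (∀ I ∈ I', IsIndepSet x I) ∧
  ∀ I ∈ I', ∀ J : Finset (Fin N), IsIndepSet x J →
    Submodule.span ℝ (x '' ↑I) ≤ Submodule.span ℝ (x '' ↑J) → J ∈ I'

/-- `P₊(X, 𝕀')`. -/
def PplusOn {n N : ℕ} (x : Fin N → Fin n → ℝ) (I' : Set (Finset (Fin N))) :
    Submodule ℂ (MvPolynomial (Fin n) ℂ) :=
  Submodule.span ℂ {p | ∃ Y : Finset (Fin N), (∃ I ∈ I', Y ∩ I = ∅) ∧ p = pProd x Y}

/-- `Π⁰_j(S^⊥)`: homogeneous polynomials of degree `j` annihilated by directional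
derivatives along `S`. -/
def homPerp (n j : ℕ) (S : Submodule ℝ (Fin n → ℝ)) : Set (MvPolynomial (Fin n) ℂ) :=
  {p | p ∈ MvPolynomial.homogeneousSubmodule (Fin n) ℂ j ∧ ∀ η ∈ S, pDop (lin n η) p = 0}

/-- `Π⁰_j(W)`: homogeneous polynomials of degree `j` which are functions on `W`
(annihilated by derivatives along `W^⊥`). -/
def homOn (n j : ℕ) (W : Submodule ℝ (Fin n → ℝ)) : Set (MvPolynomial (Fin n) ℂ) :=
  {p | p ∈ MvPolynomial.homogeneousSubmodule (Fin n) ℂ j ∧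
    ∀ η : Fin n → ℝ, (∀ w ∈ W, dotp η w = 0) → pDop (lin n η) p = 0}

/-- `S(X,𝕀')`: spans of independent sets outside `𝕀'`. -/
def exSpans {n N : ℕ} (x : Fin N → Fin n → ℝ) (I' : Set (Finset (Fin N))) :
    Set (Submodule ℝ (Fin n → ℝ)) :=
  {S | ∃ I : Finset (Fin N), IsIndepSet x I ∧ I ∉ I' ∧ Submodule.span ℝ (x '' ↑I) = S}

/-- The external ideal `I₊(X)`. -/
def IplusIdeal {n : ℕ} {ι : Type*} [Fintype ι] (x : ι → Fin n → ℝ) :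
    Ideal (MvPolynomial (Fin n) ℂ) :=
  Ideal.span {p | ∃ F η, IsFacet x F ∧ IsNormal η F ∧ p = lin n η ^ (mult x F + 1)}

/-- The semi-external ideal `I₊(X,𝕀')`. -/
def IplusOn {n N : ℕ} (x : Fin N → Fin n → ℝ) (I' : Set (Finset (Fin N))) :
    Ideal (MvPolynomial (Fin n) ℂ) :=
  IplusIdeal x ⊔ Ideal.span {p | ∃ S ∈ exSpans x I', p ∈ homPerp n (mult x S) S}

/-- `expPart V c j`: the degree-`j` homogeneous part of `∑_{v ∈ V} c_v e_v`. -/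
def expPart (n : ℕ) (V : Finset (Fin n → ℝ)) (c : (Fin n → ℝ) → ℂ) (j : ℕ) :
    MvPolynomial (Fin n) ℂ :=
  ((j.factorial : ℂ))⁻¹ • ∑ v ∈ V, c v • (lin n v) ^ j

/-- The least space `Π(V)` of a finite point set `V`. -/
def leastSpace (n : ℕ) (V : Finset (Fin n → ℝ)) : Submodule ℂ (MvPolynomial (Fin n) ℂ) :=
  Submodule.span ℂ
    {p | ∃ (c : (Fin n → ℝ) → ℂ) (j₀ : ℕ),
      p = expPart n V c j₀ ∧ p ≠ 0 ∧ ∀ j < j₀, expPart n V c j = 0}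

/-- Simplicity of the arrangement `H(X,λ)`. -/
def SimpleArrangement {n N : ℕ} (x : Fin N → Fin n → ℝ) (lam : Fin N → ℝ) : Prop :=
  ∀ Y : Finset (Fin N), (∃ t : Fin n → ℝ, ∀ i ∈ Y, dotp (x i) t = lam i) →
    LinearIndependent ℝ (fun i : {i // i ∈ Y} => x i.1)

/-- `b` is `I`-internally active in `B`. -/
def IActive {n N : ℕ} (x : Fin N → Fin n → ℝ) (Iset B : Finset (Fin N)) (b : Fin N) : Prop :=
  b ∈ B ∧ b ∈ Iset ∧ ∀ j, x j ∉ Submodule.span ℝ (x '' ↑(B.erase b)) → j ≤ b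

/-- `B` is an `I`-internal basis. -/
def IInternal {n N : ℕ} (x : Fin N → Fin n → ℝ) (Iset B : Finset (Fin N)) : Prop :=
  IsBasisSet x B ∧ ∀ b, ¬ IActive x Iset B b

/-- The semi-internal space `P₋(X,I)`. -/
def Pminus {n N : ℕ} (x : Fin N → Fin n → ℝ) (Iset : Finset (Fin N)) :
    Submodule ℂ (MvPolynomial (Fin n) ℂ) :=
  ⨅ b ∈ Iset, centralPOn x (Finset.univ.erase b)

/-- The semi-internal ideal `I₋(X,I)`. -/
def IminusOn {n N : ℕ} (x : Fin N → Fin n → ℝ) (Iset : Finset (Fin N)) :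
    Ideal (MvPolynomial (Fin n) ℂ) :=
  centralIdeal x ⊔
    Ideal.span {p | ∃ F η, IsFacet x F ∧ IsNormal η F ∧ ¬ (x '' ↑Iset ⊆ ↑F) ∧
      p = lin n η ^ (mult x F - 1)}

/-- The semi-internal ideal `J₋(X,I)` of `I`-long polynomials. -/
def JminusOn {n N : ℕ} (x : Fin N → Fin n → ℝ) (Iset : Finset (Fin N)) :
    Ideal (MvPolynomial (Fin n) ℂ) :=
  Ideal.span {p | ∃ Y : Finset (Fin N),
    (∀ B, IInternal x Iset B → (Y ∩ B).Nonempty) ∧ p = pProd x Y}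

/-- Greedy completion `ex(I)` of an independent set by the auxiliary ordered basis `b0`. -/
def exComp {n N : ℕ} (x : Fin N → Fin n → ℝ) (b0 : Fin n → Fin n → ℝ) (I : Finset (Fin N)) :
    Finset (Fin N ⊕ Fin n) :=
  I.image Sum.inl ∪
    (Finset.univ.filter fun k : Fin n =>
      b0 k ∉ Submodule.span ℝ (x '' ↑I ∪ b0 '' {j | j < k})).image Sum.inr

/-! Move a pair `(Y, I)` with `I ∈ 𝕀'` and `Y ∩ I = ∅` towards `Y = X(I)`, where `p_Y = Q_I`.
If some `y ∈ Y` lies in the span of the elements of `I` preceding it, write `x_y = ∑ c_j x_j` over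
those `j`; then `p_Y = ∑ c_j p_{Y - y + j}`, and for `c_j ≠ 0` the set `I - j + y` is independent
with the same span as `I`, hence lies in `𝕀'`, and is disjoint from `Y - y + j`, whose index sum is
smaller. Otherwise `Y ⊆ X(I)`, and if `Y ≠ X(I)` an `i ∈ X(I) \ Y` either lies outside `span I`
(pass to `I + i`) or has a nonzero coefficient on some `j > i` in its expansion over `I` (pass to
`I - j + i`); semi-externality keeps the new set in `𝕀'`, and `(N - |I|, ∑ I)` decreases
lexicographically. -/

namespace Finset

theorem sum_insert_erase_lt {ι M : Type*} [DecidableEq ι] [AddCommMonoid M] [PartialOrder M]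
    [IsOrderedCancelAddMonoid M] {s : Finset ι} {a b : ι} {f : ι → M}
    (ha : a ∉ s) (hb : b ∈ s) (hab : f a < f b) :
    ∑ k ∈ insert a (s.erase b), f k < ∑ k ∈ s, f k := by
  rw [sum_insert fun h => ha (mem_of_mem_erase h), ← add_sum_erase s f hb]
  exact add_lt_add_left hab _

theorem disjoint_insert_erase_swap {ι : Type*} [DecidableEq ι] {s t : Finset ι} {a b : ι}
    (h : Disjoint s t) (ha : a ∈ s) (hb : b ∈ t) :
    Disjoint (insert b (s.erase a)) (insert a (t.erase b)) := by
  rw [Finset.disjoint_left] at h ⊢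
  grind

end Finset

section Exchange

variable {ι K V : Type*} [DivisionRing K] [AddCommGroup V] [Module K V] {v : ι → V}

open Submodule Set

theorem mem_span_image_insert_diff_of_sum_eq {s : Set ι} {T : Finset ι} {c : ι → K} {i j : ι}
    (hTs : ↑T ⊆ s) (hsum : ∑ k ∈ T, c k • v k = v i) (hjT : j ∈ T) (hcj : c j ≠ 0) :
    v j ∈ span K (v '' insert i (s \ {j})) := by
  have hvj : v j = (c j)⁻¹ • (v i - ∑ k ∈ T.erase j, c k • v k) := by
    rw [← hsum, ← Finset.add_sum_erase T _ hjT, add_sub_cancel_right, smul_smul,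
      inv_mul_cancel₀ hcj, one_smul]
  rw [hvj]
  refine smul_mem _ _ (sub_mem (subset_span (mem_image_of_mem v (mem_insert i _)))
    (sum_smul_mem _ _ fun k hk => subset_span (mem_image_of_mem v (mem_insert_of_mem i ?_))))
  obtain ⟨hkj, hkT⟩ := Finset.mem_erase.1 hk
  exact ⟨hTs hkT, hkj⟩

theorem span_image_insert_diff_eq {s : Set ι} {i j : ι} (hi : v i ∈ span K (v '' s))
    (hj : v j ∈ span K (v '' insert i (s \ {j}))) :
    span K (v '' insert i (s \ {j})) = span K (v '' s) := by
  refine le_antisymm (span_le.2 ?_) (span_le.2 ?_)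
  · rw [image_insert_eq, insert_subset_iff]
    exact ⟨hi, (image_mono sdiff_subset).trans subset_span⟩
  · rintro _ ⟨k, hk, rfl⟩
    by_cases hkj : k = j
    · exact hkj ▸ hj
    · exact subset_span (mem_image_of_mem v (mem_insert_of_mem i ⟨hk, hkj⟩))

theorem LinearIndepOn.insert_diff_of_span_eq {s : Set ι} {i j : ι} (hs : LinearIndepOn K v s)
    (hj : j ∈ s) (hspan : span K (v '' insert i (s \ {j})) = span K (v '' s)) :
    LinearIndepOn K v (insert i (s \ {j})) := by
  have hs' : LinearIndepOn K v (s \ {j}) := hs.mono sdiff_subset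
  refine hs'.insert fun hi => ?_
  have hvj : v j ∉ span K (v '' (s \ {j})) := by
    rw [hs'.notMem_span_iff, insert_sdiff_singleton, insert_eq_of_mem hj]
    exact ⟨hs, fun h => h.2 rfl⟩
  rw [image_insert_eq, span_insert_eq_span hi] at hspan
  exact hvj (hspan.ge (subset_span (mem_image_of_mem v hj)))

theorem exists_le_ne_zero_of_sum_smul_eq [LinearOrder ι] {s : Finset ι} {c : ι → K} {w : V}
    {i : ι}
    (hsum : ∑ k ∈ s, c k • v k = w) (hw : w ∉ span K (v '' {k | k ∈ s ∧ k < i})) :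
    ∃ j ∈ s, i ≤ j ∧ c j ≠ 0 := by
  by_contra! hzero
  refine hw (hsum ▸ sum_mem fun k hk => ?_)
  rcases lt_or_ge k i with hki | hik
  · exact smul_mem _ _ (subset_span ⟨k, ⟨hk, hki⟩, rfl⟩)
  · rw [hzero k hk hik, zero_smul]
    exact zero_mem _

end Exchange

theorem lin_sum_smul {n : ℕ} {ι : Type*} (s : Finset ι) (c : ι → ℝ) (x : ι → Fin n → ℝ) :
    lin n (∑ k ∈ s, c k • x k) = ∑ k ∈ s, (c k : ℂ) • lin n (x k) := by
  simp only [lin, Finset.sum_apply, Pi.smul_apply, smul_eq_mul, Complex.ofReal_sum,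
    Complex.ofReal_mul, map_sum, map_mul, Finset.sum_mul, Finset.smul_sum, smul_eq_C_mul]
  rw [Finset.sum_comm]
  simp only [mul_assoc]

theorem pProd_eq_sum_of_sum_smul_eq {n : ℕ} {ι : Type*} [DecidableEq ι] {x : ι → Fin n → ℝ}
    {Y T : Finset ι} {c : ι → ℝ} {i : ι} (hi : i ∈ Y) (hTY : Disjoint T Y)
    (hsum : ∑ k ∈ T, c k • x k = x i) :
    pProd x Y = ∑ j ∈ T, (c j : ℂ) • pProd x (insert j (Y.erase i)) := by
  have hsplit : pProd x Y = lin n (x i) * pProd x (Y.erase i) :=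
    (Finset.mul_prod_erase Y _ hi).symm
  rw [hsplit, ← hsum, lin_sum_smul, Finset.sum_mul]
  refine Finset.sum_congr rfl fun j hj => ?_
  unfold pProd
  rw [smul_mul_assoc, Finset.prod_insert fun h =>
    Finset.disjoint_left.1 hTY hj (Finset.mem_of_mem_erase h)]

section SemiExternal

variable {n N : ℕ} {x : Fin N → Fin n → ℝ} {I' : Set (Finset (Fin N))}

open Submodule Set

theorem isIndepSet_iff_linearIndepOn {ι : Type*} (x : ι → Fin n → ℝ) (I : Finset ι) :
    IsIndepSet x I ↔ LinearIndepOn ℝ x (I : Set ι) :=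
  Iff.rfl

theorem SemiExternal.linearIndepOn (h : SemiExternal x I') {I : Finset (Fin N)} (hI : I ∈ I') :
    LinearIndepOn ℝ x (I : Set (Fin N)) :=
  h.1 I hI

theorem SemiExternal.insert_mem (h : SemiExternal x I') {I : Finset (Fin N)} (hI : I ∈ I')
    {i : Fin N} (hi : x i ∉ span ℝ (x '' I)) : insert i I ∈ I' := by
  refine h.2 I hI _ ?_ (span_mono (image_mono (Finset.coe_subset.2 (Finset.subset_insert i I))))
  rw [isIndepSet_iff_linearIndepOn, Finset.coe_insert]
  exact (h.linearIndepOn hI).insert hi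

theorem SemiExternal.insert_erase_mem (h : SemiExternal x I') {I T : Finset (Fin N)}
    (hI : I ∈ I') (hTI : T ⊆ I) {c : Fin N → ℝ} {i j : Fin N}
    (hsum : ∑ k ∈ T, c k • x k = x i) (hjT : j ∈ T) (hcj : c j ≠ 0) :
    insert i (I.erase j) ∈ I' := by
  have hxi : x i ∈ span ℝ (x '' I) :=
    hsum ▸ sum_smul_mem _ _ fun k hk => subset_span (mem_image_of_mem x (hTI hk))
  have hspan : span ℝ (x '' ↑(insert i (I.erase j))) = span ℝ (x '' I) := by
    rw [Finset.coe_insert, Finset.coe_erase]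
    exact span_image_insert_diff_eq hxi
      (mem_span_image_insert_diff_of_sum_eq (Finset.coe_subset.2 hTI) hsum hjT hcj)
  refine h.2 I hI _ ?_ hspan.ge
  rw [Finset.coe_insert, Finset.coe_erase] at hspan
  rw [isIndepSet_iff_linearIndepOn, Finset.coe_insert, Finset.coe_erase]
  exact (h.linearIndepOn hI).insert_diff_of_span_eq (hTI hjT) hspan

theorem SemiExternal.exists_eq_XofY_or_mem_span_lt (h : SemiExternal x I')
    {I Y : Finset (Fin N)} (hI : I ∈ I') (hYI : Disjoint Y I) :
    ∃ J ∈ I', Disjoint Y J ∧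
      (Y = XofY x J ∨ ∃ i ∈ Y, x i ∈ span ℝ (x '' {j | j ∈ J ∧ j < i})) := by
  by_cases hlow : ∃ i ∈ Y, x i ∈ span ℝ (x '' {j | j ∈ I ∧ j < i})
  · exact ⟨I, hI, hYI, Or.inr hlow⟩
  push Not at hlow
  have hYX : Y ⊆ XofY x I := fun i hi => by
    simp [XofY, Finset.disjoint_left.1 hYI hi, hlow i hi]
  by_cases hXY : XofY x I ⊆ Y
  · exact ⟨I, hI, hYI, Or.inl (hYX.antisymm hXY)⟩
  obtain ⟨i, hiX, hiY⟩ := Finset.not_subset.1 hXY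
  obtain ⟨hiI, hi⟩ : i ∉ I ∧ x i ∉ span ℝ (x '' {j | j ∈ I ∧ j < i}) := by
    simpa [XofY] using hiX
  by_cases hspan : x i ∈ span ℝ (x '' I)
  · obtain ⟨c, hc⟩ := (mem_span_image_finset_iff_exists_fun' ℝ).1 hspan
    obtain ⟨j, hjI, hij, hcj⟩ := exists_le_ne_zero_of_sum_smul_eq hc hi
    have hij : i < j := hij.lt_of_ne fun hij => hiI (hij ▸ hjI)
    have hsum : ∑ b ∈ insert i (I.erase j), (b : ℕ) < ∑ b ∈ I, (b : ℕ) :=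
      Finset.sum_insert_erase_lt hiI hjI hij
    have hcard : (insert i (I.erase j)).card = I.card := by
      rw [Finset.card_insert_of_notMem fun h => hiI (Finset.mem_of_mem_erase h),
        Finset.card_erase_add_one hjI]
    exact h.exists_eq_XofY_or_mem_span_lt (h.insert_erase_mem hI subset_rfl hc hjI hcj)
      (Finset.disjoint_insert_right.2 ⟨hiY, hYI.mono_right (Finset.erase_subset j I)⟩)
  · have hcard : I.card < (insert i I).card ∧ (insert i I).card ≤ N := by
      rw [Finset.card_insert_of_notMem hiI]
      simpa using Finset.card_lt_univ_of_notMem hiI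
    exact h.exists_eq_XofY_or_mem_span_lt (h.insert_mem hI hspan)
      (Finset.disjoint_insert_right.2 ⟨hiY, hYI⟩)
termination_by (N - I.card, ∑ b ∈ I, (b : ℕ))
decreasing_by
  · exact Prod.lex_def.2 (Or.inr ⟨by rw [hcard], hsum⟩)
  · exact Prod.lex_def.2 (Or.inl (by omega))

theorem SemiExternal.pProd_mem_span_QB (h : SemiExternal x I') {I Y : Finset (Fin N)}
    (hI : I ∈ I') (hYI : Disjoint Y I) :
    pProd x Y ∈ span ℂ {p | ∃ I ∈ I', p = QB x I} := by
  obtain ⟨J, hJ, hYJ, hY | ⟨i, hiY, hi⟩⟩ := h.exists_eq_XofY_or_mem_span_lt hI hYI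
  · exact subset_span ⟨J, hJ, by rw [hY, QB]⟩
  set T := J.filter (· < i)
  have hTJ : T ⊆ J := Finset.filter_subset _ _
  obtain ⟨c, hc⟩ := (mem_span_image_finset_iff_exists_fun' ℝ (s := T)).1 <| by
    rwa [Finset.coe_filter]
  rw [pProd_eq_sum_of_sum_smul_eq hiY (hYJ.symm.mono_left hTJ) hc]
  refine sum_mem fun j hjT => ?_
  by_cases hcj : c j = 0
  · simp [hcj]
  have hjY : j ∉ Y := Finset.disjoint_right.1 hYJ (hTJ hjT)
  have hsum : ∑ y ∈ insert j (Y.erase i), (y : ℕ) < ∑ y ∈ Y, (y : ℕ) :=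
    Finset.sum_insert_erase_lt hjY hiY (Finset.mem_filter.1 hjT).2
  exact smul_mem _ _ (h.pProd_mem_span_QB (h.insert_erase_mem hJ hTJ hc hjT hcj)
    (Finset.disjoint_insert_erase_swap hYJ hiY (hTJ hjT)))
termination_by ∑ y ∈ Y, (y : ℕ)
decreasing_by exact hsum

theorem pY_in_span_QI_general (n N : ℕ) (x : Fin N → Fin n → ℝ)
    (I' : Set (Finset (Fin N))) (hI' : SemiExternal x I') :
    (∀ I0 ∈ I', ∀ Y : Finset (Fin N), Y ∩ I0 = ∅ →
      pProd x Y ∈ Submodule.span ℂ {p | ∃ I ∈ I', p = QB x I}) ∧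
    PplusOn x I' ≤ Submodule.span ℂ {p | ∃ I ∈ I', p = QB x I} := by
  have hmem : ∀ I0 ∈ I', ∀ Y : Finset (Fin N), Y ∩ I0 = ∅ →
      pProd x Y ∈ Submodule.span ℂ {p | ∃ I ∈ I', p = QB x I} := fun I0 hI0 Y hY =>
    hI'.pProd_mem_span_QB hI0 (Finset.disjoint_iff_inter_eq_empty.2 hY)
  refine ⟨hmem, Submodule.span_le.2 ?_⟩
  rintro _ ⟨Y, ⟨I0, hI0, hY⟩, rfl⟩
  exact hmem I0 hI0 Y hY

theorem pY_in_span_QI (n N : ℕ) (x : Fin N → Fin n → ℝ)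
    (hx0 : ∀ i, x i ≠ 0) (hx : Submodule.span ℝ (Set.range x) = ⊤)
    (I' : Set (Finset (Fin N))) (hI' : SemiExternal x I') :
    (∀ I0 ∈ I', ∀ Y : Finset (Fin N), Y ∩ I0 = ∅ →
      pProd x Y ∈ Submodule.span ℂ {p | ∃ I ∈ I', p = QB x I}) ∧
    PplusOn x I' ≤ Submodule.span ℂ {p | ∃ I ∈ I', p = QB x I} :=
  pY_in_span_QI_general n N x I' hI'
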